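/- An h.v. model p satisfies strong determinism if and only if it satisfies both weak determinism and locality. -/

import Mathlib

open MeasureTheory Set

/-- The conditional probability `p[S‖m]` of an event `S` given a sub-σ-algebra `m`:
the conditional expectation, with respect to `p`, of the indicator function of `S` given `m`. -/
noncomputable def condProb {α : Type*} [MeasurableSpace α]
    (p : Measure α) (m : MeasurableSpace α) (S : Set α) : α → ℝ :=
  MeasureTheory.condExp m p (S.indicator fun _ => (1 : ℝ))

/-- `f : Z → ℝ` is a (measurable) version of the conditional probability, with respect to `p`,
of the event `S` given the coordinate projection `π : α → Z`. -/
def IsCondVersion {α Z : Type*} [MeasurableSpace α] [MeasurableSpace Z]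
    (p : Measure α) (π : α → Z) (S : Set α) (f : Z → ℝ) : Prop :=
  Measurable f ∧
    (fun a => f (π a)) =ᵐ[p] condProb p (MeasurableSpace.comap π inferInstance) S

section HiddenVariable

/- Outcome spaces `Xa`, `Xb` are finite with the power-set σ-algebra; measurement spaces
`Ya`, `Yb` and the hidden-variable space `Λ` are arbitrary measurable spaces.  A hidden-variable
model is a (probability) measure on `(Xa × Xb) × (Ya × Yb) × Λ`; an empirical model is a
(probability) measure on `(Xa × Xb) × (Ya × Yb)`. -/
variable {Xa Xb Ya Yb : Type*} {Λ : Type*}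
  [Fintype Xa] [MeasurableSpace Xa] [DiscreteMeasurableSpace Xa]
  [Fintype Xb] [MeasurableSpace Xb] [DiscreteMeasurableSpace Xb]
  [MeasurableSpace Ya] [MeasurableSpace Yb] [MeasurableSpace Λ]

/-- The sub-σ-algebra `𝒴 ⊗ ℒ` of events depending on the measurements and the hidden variable. -/
def mYL : MeasurableSpace ((Xa × Xb) × (Ya × Yb) × Λ) :=
  MeasurableSpace.comap (fun ω => ω.2) inferInstance

/-- The sub-σ-algebra `𝒴a ⊗ ℒ` of events depending on Alice's measurement and the hidden
variable. -/
def mYaL : MeasurableSpace ((Xa × Xb) × (Ya × Yb) × Λ) :=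
  MeasurableSpace.comap (fun ω => (ω.2.1.1, ω.2.2)) inferInstance

/-- The sub-σ-algebra `𝒴b ⊗ ℒ` of events depending on Bob's measurement and the hidden
variable. -/
def mYbL : MeasurableSpace ((Xa × Xb) × (Ya × Yb) × Λ) :=
  MeasurableSpace.comap (fun ω => (ω.2.1.2, ω.2.2)) inferInstance

/-- The sub-σ-algebra `𝒴` of events depending on the measurements only. -/
def mY : MeasurableSpace ((Xa × Xb) × (Ya × Yb) × Λ) :=
  MeasurableSpace.comap (fun ω => ω.2.1) inferInstance

/-- **Locality**: `p[x‖𝒴⊗ℒ] = p[x_a‖𝒴a⊗ℒ] ⬝ p[x_b‖𝒴b⊗ℒ]` a.s., for every outcome `x`. -/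
def Locality (p : Measure ((Xa × Xb) × (Ya × Yb) × Λ)) : Prop :=
  ∀ x : Xa × Xb,
    condProb p mYL {ω | ω.1 = x} =ᵐ[p]
      fun ω => condProb p mYaL {ω' | ω'.1.1 = x.1} ω * condProb p mYbL {ω' | ω'.1.2 = x.2} ω

/-- **Parameter independence**: `p[x_a‖𝒴⊗ℒ] = p[x_a‖𝒴a⊗ℒ]` a.s. for every `x_a`, and likewise
with `a` and `b` interchanged. -/
def ParameterIndependence (p : Measure ((Xa × Xb) × (Ya × Yb) × Λ)) : Prop :=
  (∀ xa : Xa, condProb p mYL {ω | ω.1.1 = xa} =ᵐ[p] condProb p mYaL {ω | ω.1.1 = xa}) ∧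
  (∀ xb : Xb, condProb p mYL {ω | ω.1.2 = xb} =ᵐ[p] condProb p mYbL {ω | ω.1.2 = xb})

/-- **Outcome independence**: `p[x‖𝒴⊗ℒ] = p[x_a‖𝒴⊗ℒ] ⬝ p[x_b‖𝒴⊗ℒ]` a.s., for every
outcome `x`. -/
def OutcomeIndependence (p : Measure ((Xa × Xb) × (Ya × Yb) × Λ)) : Prop :=
  ∀ x : Xa × Xb,
    condProb p mYL {ω | ω.1 = x} =ᵐ[p]
      fun ω => condProb p mYL {ω' | ω'.1.1 = x.1} ω * condProb p mYL {ω' | ω'.1.2 = x.2} ω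

/-- **λ-independence**: `p[L‖𝒴] = p(L)` a.s., for every event `L` of the hidden-variable
space. -/
def LambdaIndependence (p : Measure ((Xa × Xb) × (Ya × Yb) × Λ)) : Prop :=
  ∀ L : Set Λ, MeasurableSet L →
    condProb p mY {ω | ω.2.2 ∈ L} =ᵐ[p] fun _ => (p {ω | ω.2.2 ∈ L}).toReal

/-- **Weak determinism**: `p[x‖𝒴⊗ℒ] ∈ {0,1}` a.s., for every outcome `x`. -/
def WeakDeterminism (p : Measure ((Xa × Xb) × (Ya × Yb) × Λ)) : Prop :=
  ∀ x : Xa × Xb, ∀ᵐ ω ∂p, condProb p mYL {ω' | ω'.1 = x} ω ∈ ({0, 1} : Set ℝ)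

/-- **Strong determinism**: `p[x_a‖𝒴a⊗ℒ] ∈ {0,1}` a.s. for every `x_a`, and likewise with `a`
and `b` interchanged. -/
def StrongDeterminism (p : Measure ((Xa × Xb) × (Ya × Yb) × Λ)) : Prop :=
  (∀ xa : Xa, ∀ᵐ ω ∂p, condProb p mYaL {ω' | ω'.1.1 = xa} ω ∈ ({0, 1} : Set ℝ)) ∧
  (∀ xb : Xb, ∀ᵐ ω ∂p, condProb p mYbL {ω' | ω'.1.2 = xb} ω ∈ ({0, 1} : Set ℝ))

end HiddenVariable

/-! A conditional probability `p[S‖m]` that takes only the values `0` and `1` is the indicator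
of `S` itself. Under strong determinism, `p[x_a‖𝒴a⊗ℒ] ⬝ p[x_b‖𝒴b⊗ℒ]` is therefore the indicator
of the outcome `x`, and being `𝒴⊗ℒ`-measurable it is also `p[x‖𝒴⊗ℒ]`: this is locality, and
weak determinism follows. Conversely, since the `p[x_b‖𝒴b⊗ℒ]` sum to `1`, locality writes
`p[x_a‖𝒴a⊗ℒ]` as `∑ x_b, p[(x_a, x_b)‖𝒴⊗ℒ]`, a sum of values in `{0,1}` bounded by `1`. -/

section CondProb

variable {α : Type*} {m m0 : MeasurableSpace α} {p : Measure α}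

lemma setIntegral_indicator_one_eq_measureReal {B S : Set α} (hS : MeasurableSet S) :
    ∫ ω in B, S.indicator (fun _ => (1 : ℝ)) ω ∂p = p.real (S ∩ B) := by
  rw [← Pi.one_def, integral_indicator_one hS, measureReal_restrict_apply hS]

variable [IsFiniteMeasure p]

/-- The a.e. `{0,1}`-valued function `p[S‖m]` is the indicator of the `m`-measurable set
`A = p[S‖m]⁻¹{1}`, and integrating over `A` and over `Aᶜ` shows `A =ᵐ S`. -/
lemma condProb_ae_eq_indicator_of_ae_mem_zero_one (hm : m ≤ m0) {S : Set α}
    (hS : MeasurableSet S) (h01 : ∀ᵐ ω ∂p, condProb p m S ω ∈ ({0, 1} : Set ℝ)) :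
    condProb p m S =ᵐ[p] S.indicator fun _ => 1 := by
  set A := condProb p m S ⁻¹' {1}
  have hA : MeasurableSet[m] A := stronglyMeasurable_condExp.measurable (measurableSet_singleton 1)
  have hcondProb_eq : condProb p m S =ᵐ[p] A.indicator fun _ => 1 := by
    filter_upwards [h01] with ω hω
    rcases hω with h0 | (h1 : condProb p m S ω = 1)
    · simp [A, h0]
    · simp [A, h1]
  have hmeasure : ∀ B, MeasurableSet[m] B → p.real (A ∩ B) = p.real (S ∩ B) := fun B hB => by
    rw [← setIntegral_indicator_one_eq_measureReal (hm A hA),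
      ← setIntegral_indicator_one_eq_measureReal hS,
      ← setIntegral_congr_ae (hm B hB) (hcondProb_eq.mono fun ω h _ => h)]
    exact setIntegral_condExp hm ((integrable_const 1).indicator hS) hB
  have hAS : A =ᵐ[p] S := by
    refine ae_eq_set.2 ⟨?_, ?_⟩
    · have hA_eq : p.real A = p.real (S ∩ A) := by rw [← hmeasure A hA, inter_self]
      rw [← measureReal_eq_zero_iff, ← sdiff_inter_self_eq_sdiff,
        measureReal_sdiff inter_subset_right (hS.inter (hm A hA)), hA_eq, sub_self]
    · have hS_compl := hmeasure Aᶜ hA.compl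
      rw [inter_compl_self, measureReal_empty, eq_comm, measureReal_eq_zero_iff] at hS_compl
      rwa [sdiff_eq]
  exact hcondProb_eq.trans (indicator_ae_eq_of_ae_eq_set hAS)

lemma condProb_ae_eq_of_indicator_ae_eq (hm : m ≤ m0) {S : Set α} (hS : MeasurableSet S)
    {f : α → ℝ} (hf : StronglyMeasurable[m] f) (hSf : S.indicator (fun _ => 1) =ᵐ[p] f) :
    condProb p m S =ᵐ[p] f := by
  have hfi : Integrable f p := ((integrable_const 1).indicator hS).congr hSf
  unfold condProb
  rw [← condExp_of_stronglyMeasurable hm hf hfi]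
  exact condExp_congr_ae hSf

lemma ae_sum_condProb_fiber_eq_one {ι : Type*} [Fintype ι] [MeasurableSpace ι]
    [MeasurableSingletonClass ι] (hm : m ≤ m0) {g : α → ι} (hg : Measurable g) :
    ∀ᵐ ω ∂p, ∑ i, condProb p m (g ⁻¹' {i}) ω = 1 := by
  classical
  have hpartition : ∑ i, (g ⁻¹' {i}).indicator (fun _ => (1 : ℝ)) = fun _ => 1 := by
    ext ω
    simp [Set.indicator_apply]
  have hsum := condExp_finsetSum (μ := p) (s := Finset.univ)
    (fun i _ => (integrable_const (1 : ℝ)).indicator (hg (measurableSet_singleton i))) m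
  rw [hpartition, condExp_const hm] at hsum
  filter_upwards [hsum] with ω hω
  simpa [condProb] using hω.symm

end CondProb

lemma Finset.sum_mem_zero_one {ι : Type*} {s : Finset ι} {t : ι → ℝ}
    (h01 : ∀ i ∈ s, t i ∈ ({0, 1} : Set ℝ)) (hle : ∑ i ∈ s, t i ≤ 1) :
    ∑ i ∈ s, t i ∈ ({0, 1} : Set ℝ) := by
  simp only [mem_insert_iff, mem_singleton_iff] at h01 ⊢
  by_cases hzero : ∀ i ∈ s, t i = 0
  · exact Or.inl (Finset.sum_eq_zero hzero)
  push Not at hzero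
  obtain ⟨i, hi, hne⟩ := hzero
  have hnonneg : ∀ i ∈ s, 0 ≤ t i := fun i hi => by rcases h01 i hi with h | h <;> simp [h]
  have hone : t i = 1 := (h01 i hi).resolve_left hne
  exact Or.inr (le_antisymm hle (hone ▸ Finset.single_le_sum hnonneg hi))

lemma mem_zero_one_of_mul_mem_zero_one {ι κ : Type*} [Fintype ι] [Fintype κ]
    {a : ι → ℝ} {b : κ → ℝ} (ha : ∑ i, a i = 1) (hb : ∑ j, b j = 1)
    (hab : ∀ i j, a i * b j ∈ ({0, 1} : Set ℝ)) (i : ι) : a i ∈ ({0, 1} : Set ℝ) := by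
  have hrow : ∀ i, a i = ∑ j, a i * b j := fun i => by rw [← Finset.mul_sum, hb, mul_one]
  have hnonneg : ∀ i, 0 ≤ a i := fun i => by
    rw [hrow i]
    refine Finset.sum_nonneg fun j _ => ?_
    rcases hab i j with h | (h : a i * b j = 1) <;> simp [h]
  have hle : a i ≤ 1 := ha ▸ Finset.single_le_sum (fun i _ => hnonneg i) (Finset.mem_univ i)
  rw [hrow i] at hle ⊢
  exact Finset.sum_mem_zero_one (fun j _ => hab i j) hle

section HiddenVariableModel

variable {Xa Xb Ya Yb Λ : Type*} [MeasurableSpace Ya] [MeasurableSpace Yb] [MeasurableSpace Λ]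

lemma mYaL_le_mYL : (mYaL : MeasurableSpace ((Xa × Xb) × (Ya × Yb) × Λ)) ≤ mYL := by
  rintro _ ⟨t, ht, rfl⟩
  exact ⟨(fun q : (Ya × Yb) × Λ => (q.1.1, q.2)) ⁻¹' t,
    (measurable_fst.fst.prodMk measurable_snd :
      Measurable fun q : (Ya × Yb) × Λ => (q.1.1, q.2)) ht, rfl⟩

lemma mYbL_le_mYL : (mYbL : MeasurableSpace ((Xa × Xb) × (Ya × Yb) × Λ)) ≤ mYL := by
  rintro _ ⟨t, ht, rfl⟩
  exact ⟨(fun q : (Ya × Yb) × Λ => (q.1.2, q.2)) ⁻¹' t,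
    (measurable_fst.snd.prodMk measurable_snd :
      Measurable fun q : (Ya × Yb) × Λ => (q.1.2, q.2)) ht, rfl⟩

variable [MeasurableSpace Xa] [MeasurableSpace Xb]

lemma mYL_le : (mYL : MeasurableSpace ((Xa × Xb) × (Ya × Yb) × Λ)) ≤
    (inferInstance : MeasurableSpace ((Xa × Xb) × (Ya × Yb) × Λ)) :=
  measurable_snd.comap_le

variable [MeasurableSingletonClass Xa] [MeasurableSingletonClass Xb]
  {p : Measure ((Xa × Xb) × (Ya × Yb) × Λ)} [IsFiniteMeasure p]

lemma StrongDeterminism.indicator_ae_eq_mul (h : StrongDeterminism p) (x : Xa × Xb) :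
    {ω : (Xa × Xb) × (Ya × Yb) × Λ | ω.1 = x}.indicator (fun _ => 1) =ᵐ[p]
      fun ω => condProb p mYaL {ω' | ω'.1.1 = x.1} ω * condProb p mYbL {ω' | ω'.1.2 = x.2} ω := by
  have hA := condProb_ae_eq_indicator_of_ae_mem_zero_one (S := {ω' | ω'.1.1 = x.1})
    (mYaL_le_mYL.trans mYL_le) (measurable_fst.fst (measurableSet_singleton x.1)) (h.1 x.1)
  have hB := condProb_ae_eq_indicator_of_ae_mem_zero_one (S := {ω' | ω'.1.2 = x.2})
    (mYbL_le_mYL.trans mYL_le) (measurable_fst.snd (measurableSet_singleton x.2)) (h.2 x.2)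
  have houtcome : {ω : (Xa × Xb) × (Ya × Yb) × Λ | ω.1 = x} =
      {ω | ω.1.1 = x.1} ∩ {ω | ω.1.2 = x.2} := by
    simp only [Prod.ext_iff, ofPred_and]
  rw [houtcome, ← Pi.one_def, inter_indicator_one]
  exact hA.symm.mul hB.symm

theorem StrongDeterminism.locality (h : StrongDeterminism p) : Locality p := fun x =>
  condProb_ae_eq_of_indicator_ae_eq mYL_le (measurable_fst (measurableSet_singleton x))
    ((stronglyMeasurable_condExp.mono mYaL_le_mYL).mul
      (stronglyMeasurable_condExp.mono mYbL_le_mYL))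
    (h.indicator_ae_eq_mul x)

theorem StrongDeterminism.weakDeterminism (h : StrongDeterminism p) : WeakDeterminism p :=
  fun x => by
    classical
    filter_upwards [h.locality x, h.indicator_ae_eq_mul x] with ω hloc hind
    rw [hloc, ← hind, Set.indicator_apply]
    split_ifs <;> simp

theorem WeakDeterminism.strongDeterminism_of_locality [Fintype Xa] [Fintype Xb]
    (hw : WeakDeterminism p) (hl : Locality p) : StrongDeterminism p := by
  have hsum_a := ae_sum_condProb_fiber_eq_one (p := p) (mYaL_le_mYL.trans mYL_le)
    (measurable_fst.fst : Measurable fun ω : (Xa × Xb) × (Ya × Yb) × Λ => ω.1.1)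
  have hsum_b := ae_sum_condProb_fiber_eq_one (p := p) (mYbL_le_mYL.trans mYL_le)
    (measurable_fst.snd : Measurable fun ω : (Xa × Xb) × (Ya × Yb) × Λ => ω.1.2)
  have hprod : ∀ᵐ ω ∂p, ∀ xa xb, condProb p mYaL {ω' | ω'.1.1 = xa} ω *
      condProb p mYbL {ω' | ω'.1.2 = xb} ω ∈ ({0, 1} : Set ℝ) := by
    filter_upwards [ae_all_iff.2 hw, ae_all_iff.2 hl] with ω hωw hωl xa xb
    exact hωl (xa, xb) ▸ hωw (xa, xb)
  constructor
  · intro xa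
    filter_upwards [hsum_a, hsum_b, hprod] with ω ha hb hab
    exact mem_zero_one_of_mul_mem_zero_one ha hb hab xa
  · intro xb
    filter_upwards [hsum_a, hsum_b, hprod] with ω ha hb hab
    exact mem_zero_one_of_mul_mem_zero_one hb ha (fun j i => by rw [mul_comm]; exact hab i j) xb

end HiddenVariableModel

/-- **Corollary.**  An h.v. model `p` satisfies strong determinism if and only if it satisfies
both weak determinism and locality. -/
theorem strongDeterminism_iff_weakDeterminism_and_locality
    {Xa Xb Ya Yb Λ : Type*}
    [Fintype Xa] [MeasurableSpace Xa] [DiscreteMeasurableSpace Xa]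
    [Fintype Xb] [MeasurableSpace Xb] [DiscreteMeasurableSpace Xb]
    [MeasurableSpace Ya] [MeasurableSpace Yb] [MeasurableSpace Λ]
    (p : Measure ((Xa × Xb) × (Ya × Yb) × Λ)) [IsProbabilityMeasure p] :
    StrongDeterminism p ↔ WeakDeterminism p ∧ Locality p :=
  ⟨fun h => ⟨h.weakDeterminism, h.locality⟩,
    fun ⟨hw, hl⟩ => hw.strongDeterminism_of_locality hl⟩
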